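/- Fix n ≥ 2. Let σ be a permutation of {1,…,n}, let w be its permutation matrix (the n×n real matrix with entry 1 at position (σ(i), i) for each i and 0 elsewhere), and let t = diag(t_1,…,t_n) be a diagonal real matrix with all t_i nonzero. Let Ū_σ(ℝ) be the set of upper triangular unipotent real matrices ū with ū_{ij} = 0 for every i < j with σ(i) > σ(j). Suppose that for every ū ∈ Ū_σ(ℝ) one has ∑_{k=1}^{n−1} (t w ū w⁻¹ t⁻¹)_{k,k+1} = ∑_{k=1}^{n−1} ū_{k,k+1}. Then there is a composition (d_1,…,d_r) of n such that σ = w_{d_1,…,d_r}, and moreover t_k = t_{k+1} for every k ∈ {1,…,n−1} such that k and k+1 lie in the same interval of the partition of {1,…,n} into consecutive intervals of lengths d_r, d_{r−1}, …, d_1 (read from left to right). -/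

import Mathlib

open Matrix

/-- Partial sums `D_a = d_1 + ⋯ + d_a` of a composition (0-indexed: `psum d a = ∑_{b < a} d b`). -/
def psum (d : ℕ → ℕ) (a : ℕ) : ℕ := ∑ b ∈ Finset.range a, d b

/-- `σ` is the block anti-diagonal permutation `w_{d_1,…,d_r}` (in 0-indexed coordinates):
for `0 ≤ a < r` and `0 ≤ k < d a`, the point `D_a + k` is sent to `n - D_{a+1} + k`. -/
def IsBlockPerm (n r : ℕ) (d : ℕ → ℕ) (σ : Equiv.Perm (Fin n)) : Prop :=
  ∀ a k : ℕ, a < r → k < d a → ∀ h : psum d a + k < n,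
    ((σ ⟨psum d a + k, h⟩ : Fin n) : ℕ) = n - psum d (a + 1) + k

/-- An upper triangular unipotent matrix: `1` on the diagonal and `0` below it. -/
def IsUnipUpper {n : ℕ} (u : Matrix (Fin n) (Fin n) ℝ) : Prop :=
  (∀ i, u i i = 1) ∧ ∀ i j : Fin n, j < i → u i j = 0

/-- The permutation matrix of `σ`: entry `1` at position `(σ(i), i)` for each `i`. -/
def permMat (n : ℕ) (σ : Equiv.Perm (Fin n)) : Matrix (Fin n) (Fin n) ℝ :=
  Matrix.of fun i j => if i = σ j then 1 else 0

/-- The sum `∑_{k=1}^{n-1} M_{k,k+1}` of the superdiagonal entries of `M`. -/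
def superdiagSum {n : ℕ} (M : Matrix (Fin n) (Fin n) ℝ) : ℝ :=
  ∑ i : Fin n, ∑ j : Fin n, if (i : ℕ) + 1 = (j : ℕ) then M i j else 0

/-!
For `i < j` with `σ i < σ j` the matrix `ū = 1 + E_{ij}` lies in `Ū_σ`, and
`t w ū w⁻¹ t⁻¹ = 1 + (t_{σ i} / t_{σ j}) E_{σ i, σ j}`. The hypothesis therefore says
`[σ j = σ i + 1] · t_{σ i} / t_{σ j} = [j = i + 1]`: whenever `σ j = σ i + 1` with `i < j`, the
positions are adjacent, `j = i + 1`, and `t_{σ i} = t_{σ j}`.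

A permutation with this adjacency property is block anti-diagonal. If `σ 0 = m`, the value
`m + k + 1` cannot sit at a position `≤ k`, so by induction `σ k = m + k` for `k < n - m`; the
remaining positions are then sent onto `[0, m)` by a permutation with the same property, and
induction on `n` produces the composition. Inside one block of values, consecutive values sit at
consecutive positions, which gives `t_k = t_{k+1}`.
-/

section Conjugation

variable {n : ℕ}

lemma permMat_eq_permMatrix (σ : Equiv.Perm (Fin n)) : permMat n σ = σ⁻¹.permMatrix ℝ := by
  ext i j
  simp [permMat, PEquiv.toMatrix_apply, Equiv.Perm.inv_def, Equiv.eq_symm_apply, eq_comm]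

lemma inv_permMat (σ : Equiv.Perm (Fin n)) : (permMat n σ)⁻¹ = σ.permMatrix ℝ := by
  rw [permMat_eq_permMatrix]
  exact Matrix.inv_eq_right_inv (by rw [← Matrix.permMatrix_mul, mul_inv_cancel,
    Matrix.permMatrix_one])

lemma inv_diagonal_of_ne_zero {t : Fin n → ℝ} (ht : ∀ i, t i ≠ 0) :
    (Matrix.diagonal t)⁻¹ = Matrix.diagonal t⁻¹ :=
  Matrix.inv_eq_right_inv (by
    rw [Matrix.diagonal_mul_diagonal, ← Matrix.diagonal_one]
    exact congrArg _ (funext fun i => mul_inv_cancel₀ (ht i)))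

lemma conj_apply (σ : Equiv.Perm (Fin n)) {t : Fin n → ℝ} (ht : ∀ i, t i ≠ 0)
    (u : Matrix (Fin n) (Fin n) ℝ) (a b : Fin n) :
    (Matrix.diagonal t * permMat n σ * u * (permMat n σ)⁻¹ * (Matrix.diagonal t)⁻¹) a b
      = t a * u (σ.symm a) (σ.symm b) / t b := by
  rw [inv_permMat, inv_diagonal_of_ne_zero ht, Matrix.mul_assoc _ (permMat n σ),
    permMat_eq_permMatrix, PEquiv.toMatrix_toPEquiv_mul, PEquiv.mul_toMatrix_toPEquiv,
    Matrix.mul_diagonal, Matrix.submatrix_apply, Matrix.diagonal_mul]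
  simp [div_eq_mul_inv, Equiv.Perm.inv_def]

lemma conj_one_add_single (σ : Equiv.Perm (Fin n)) {t : Fin n → ℝ} (ht : ∀ i, t i ≠ 0)
    (i j : Fin n) :
    Matrix.diagonal t * permMat n σ * (1 + Matrix.single i j 1) * (permMat n σ)⁻¹ *
        (Matrix.diagonal t)⁻¹ = 1 + Matrix.single (σ i) (σ j) (t (σ i) / t (σ j)) := by
  ext a b
  rw [conj_apply σ ht]
  simp only [Matrix.add_apply, Matrix.single_apply, Matrix.one_apply, Equiv.eq_symm_apply]
  split_ifs <;> simp_all

lemma superdiagSum_add (M N : Matrix (Fin n) (Fin n) ℝ) :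
    superdiagSum (M + N) = superdiagSum M + superdiagSum N := by
  simp only [superdiagSum, Matrix.add_apply, ← Finset.sum_add_distrib, ite_add_ite, add_zero]

lemma superdiagSum_one : superdiagSum (1 : Matrix (Fin n) (Fin n) ℝ) = 0 := by
  refine Finset.sum_eq_zero fun i _ => Finset.sum_eq_zero fun j _ => ?_
  split_ifs with h
  · exact Matrix.one_apply_ne (by rintro rfl; omega)
  · rfl

lemma superdiagSum_single (a b : Fin n) (c : ℝ) :
    superdiagSum (Matrix.single a b c) = if (a : ℕ) + 1 = b then c else 0 := by
  unfold superdiagSum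
  rw [Finset.sum_eq_single a (fun x _ hx => Finset.sum_eq_zero fun y _ => by
    simp [Ne.symm hx]) (by simp), Finset.sum_eq_single b]
  · simp
  · simp +contextual [eq_comm]
  · simp

def PreservesSuperdiagSum (σ : Equiv.Perm (Fin n)) (t : Fin n → ℝ) : Prop :=
  ∀ u : Matrix (Fin n) (Fin n) ℝ, IsUnipUpper u →
    (∀ i j : Fin n, i < j → σ j < σ i → u i j = 0) →
    superdiagSum
      (Matrix.diagonal t * permMat n σ * u * (permMat n σ)⁻¹ * (Matrix.diagonal t)⁻¹) =
      superdiagSum u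

lemma PreservesSuperdiagSum.succ_apply {σ : Equiv.Perm (Fin n)} {t : Fin n → ℝ}
    (h : PreservesSuperdiagSum σ t) (ht : ∀ i, t i ≠ 0) {i j : Fin n} (hij : i < j)
    (hσ : (σ j : ℕ) = σ i + 1) : (j : ℕ) = i + 1 ∧ t (σ i) = t (σ j) := by
  have hunip : IsUnipUpper (1 + Matrix.single i j (1 : ℝ)) := by
    refine ⟨fun a => ?_, fun a b hba => ?_⟩
    · have : ¬(i = a ∧ j = a) := by rintro ⟨rfl, rfl⟩; exact lt_irrefl _ hij
      simp [this]
    · have : ¬(i = a ∧ j = b) := by rintro ⟨rfl, rfl⟩; exact lt_asymm hij hba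
      simp [this, hba.ne']
  have hσu : ∀ a b : Fin n, a < b → σ b < σ a → (1 + Matrix.single i j (1 : ℝ)) a b = 0 := by
    intro a b hab hσab
    have : ¬(i = a ∧ j = b) := by rintro ⟨rfl, rfl⟩; rw [Fin.lt_def] at hσab; omega
    simp [this, hab.ne]
  have key := h _ hunip hσu
  rw [conj_one_add_single σ ht, superdiagSum_add, superdiagSum_add, superdiagSum_one,
    superdiagSum_single, superdiagSum_single, if_pos hσ.symm] at key
  split_ifs at key with hji
  · exact ⟨hji.symm, (div_eq_one_iff_eq (ht _)).1 (by simpa using key)⟩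
  · simp [ht] at key

end Conjugation

lemma psum_zero (d : ℕ → ℕ) : psum d 0 = 0 :=
  Finset.sum_range_zero d

lemma psum_succ (d : ℕ → ℕ) (a : ℕ) : psum d (a + 1) = psum d a + d a :=
  Finset.sum_range_succ d a

lemma psum_succ' (d : ℕ → ℕ) (a : ℕ) : psum d (a + 1) = d 0 + psum (fun b => d (b + 1)) a := by
  rw [psum, Finset.sum_range_succ', add_comm, psum]

lemma psum_mono (d : ℕ → ℕ) : Monotone (psum d) := fun _ _ h =>
  Finset.sum_le_sum_of_subset (Finset.range_subset_range.mpr h)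

namespace Equiv.Perm

variable {n : ℕ}

def SuccAdjacent (σ : Equiv.Perm (Fin n)) : Prop :=
  ∀ i j : Fin n, i < j → (σ j : ℕ) = σ i + 1 → (j : ℕ) = i + 1

lemma SuccAdjacent.val_apply_of_add_le {σ : Equiv.Perm (Fin (n + 1))} (hσ : σ.SuccAdjacent)
    (k : ℕ) (hk : k + σ 0 ≤ n) : (σ ⟨k, by omega⟩ : ℕ) = σ 0 + k := by
  induction k using Nat.strong_induction_on with
  | _ k ih =>
  obtain _ | k := k
  · rfl
  obtain ⟨j, hσj⟩ := σ.surjective ⟨σ 0 + (k + 1), by omega⟩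
  simp only [Fin.ext_iff] at hσj
  have hkj : k < (j : ℕ) := by
    by_contra! hjk
    have := ih j (by omega) (by omega)
    simp only [Fin.eta] at this
    omega
  have hj : (j : ℕ) = k + 1 := hσ _ j hkj (by rw [ih k k.lt_succ_self (by omega)]; omega)
  rw [show (⟨k + 1, _⟩ : Fin (n + 1)) = j from Fin.ext hj.symm, hσj]

lemma SuccAdjacent.val_apply_lt_of_le {σ : Equiv.Perm (Fin (n + 1))} (hσ : σ.SuccAdjacent)
    (i : Fin (n + 1)) (hi : n + 1 - σ 0 ≤ i) : (σ i : ℕ) < σ 0 := by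
  by_contra! hle
  have hi' := hσ.val_apply_of_add_le ((σ i : ℕ) - σ 0) (by omega)
  have : (⟨(σ i : ℕ) - σ 0, _⟩ : Fin (n + 1)) = i := σ.injective (Fin.ext (by omega))
  rw [Fin.ext_iff, Fin.val_mk] at this
  omega

noncomputable def restrictLast (σ : Equiv.Perm (Fin n)) (m : ℕ) (hm : m ≤ n)
    (h : ∀ i : Fin n, n - m ≤ i → (σ i : ℕ) < m) : Equiv.Perm (Fin m) :=
  Equiv.ofBijective (fun x => ⟨σ ⟨n - m + x, by omega⟩, h _ (Nat.le_add_right _ _)⟩)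
    (Finite.injective_iff_bijective.mp fun x y hxy => by
      have := Fin.mk.inj (σ.injective (Fin.ext (Fin.mk.inj hxy)))
      exact Fin.ext (by omega))

lemma val_restrictLast_apply (σ : Equiv.Perm (Fin n)) (m : ℕ) (hm : m ≤ n)
    (h : ∀ i : Fin n, n - m ≤ i → (σ i : ℕ) < m) (x : Fin m) :
    (σ.restrictLast m hm h x : ℕ) = σ ⟨n - m + x, by omega⟩ :=
  rfl

lemma SuccAdjacent.restrictLast {σ : Equiv.Perm (Fin n)} (hσ : σ.SuccAdjacent) (m : ℕ)
    (hm : m ≤ n) (h : ∀ i : Fin n, n - m ≤ i → (σ i : ℕ) < m) :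
    (σ.restrictLast m hm h).SuccAdjacent := by
  intro i j hij hs
  simp only [val_restrictLast_apply] at hs
  have := hσ _ _ (Fin.mk_lt_mk.2 (Nat.add_lt_add_left hij _)) hs
  simp only at this
  omega

theorem SuccAdjacent.exists_isBlockPerm :
    ∀ {n : ℕ} {σ : Equiv.Perm (Fin n)}, σ.SuccAdjacent →
      ∃ (r : ℕ) (d : ℕ → ℕ), (∀ a < r, 0 < d a) ∧ psum d r = n ∧ IsBlockPerm n r d σ := by
  intro n
  induction n using Nat.strong_induction_on with
  | _ n ih =>
  intro σ hσ
  obtain _ | n := n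
  · exact ⟨0, 0, by simp, psum_zero 0, fun a _ ha => absurd ha (Nat.not_lt_zero a)⟩
  have hm : (σ 0 : ℕ) ≤ n := Nat.le_of_lt_succ (σ 0).isLt
  obtain ⟨r, d, hd, hsum, hblock⟩ :=
    ih (σ 0) (σ 0).isLt (hσ.restrictLast (σ 0) (by omega) hσ.val_apply_lt_of_le)
  obtain ⟨D, hD0, hDs⟩ : ∃ D : ℕ → ℕ, D 0 = n + 1 - σ 0 ∧ ∀ a, D (a + 1) = d a :=
    ⟨fun a => Nat.casesOn a (n + 1 - σ 0) d, rfl, fun _ => rfl⟩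
  have hpsum : ∀ a, psum D (a + 1) = n + 1 - σ 0 + psum d a := fun a => by
    simp only [psum_succ', hD0, hDs]
  have hpsum_le : ∀ a ≤ r, psum d a ≤ σ 0 := fun a ha => hsum ▸ psum_mono d ha
  refine ⟨r + 1, D, ?_, ?_, ?_⟩
  · rintro (_ | a) ha
    · omega
    · exact hDs a ▸ hd a (by omega)
  · rw [hpsum, hsum]
    omega
  · rintro (_ | a) k ha hk hlt
    · have h := hσ.val_apply_of_add_le k (by omega)
      simp only [psum_zero, zero_add, hpsum] at h ⊢
      omega
    · rw [hDs] at hk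
      have hle := hpsum_le (a + 1) (by omega)
      rw [psum_succ] at hle
      have h := hblock a k (by omega) hk (by omega)
      rw [val_restrictLast_apply] at h
      have e : (⟨psum D (a + 1) + k, hlt⟩ : Fin (n + 1)) =
          ⟨n + 1 - σ 0 + (psum d a + k), by omega⟩ :=
        Fin.ext (by simp only [hpsum]; omega)
      rw [e, h, hpsum, psum_succ]
      omega

end Equiv.Perm

lemma exists_psum_le_lt (d : ℕ → ℕ) {r x : ℕ} (hx : x < psum d r) :
    ∃ a < r, psum d a ≤ x ∧ x < psum d (a + 1) := by
  induction r with
  | zero => exact absurd hx (by simp [psum_zero])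
  | succ r ih =>
    by_cases hxr : x < psum d r
    · obtain ⟨a, har, h⟩ := ih hxr
      exact ⟨a, by omega, h⟩
    · exact ⟨r, by omega, not_lt.mp hxr, hx⟩

lemma IsBlockPerm.val_symm_succ {n r : ℕ} {d : ℕ → ℕ} {σ : Equiv.Perm (Fin n)}
    (hσ : IsBlockPerm n r d σ) (hsum : psum d r = n) {k : ℕ} (hk : k + 1 < n)
    (hbd : ∀ a, 1 ≤ a → a < r → k + 1 ≠ n - psum d a) :
    (σ.symm ⟨k + 1, hk⟩ : ℕ) = σ.symm ⟨k, by omega⟩ + 1 := by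
  -- the image `[n - psum d (a + 1), n - psum d a)` of block `a` contains `k`,
  -- and by `hbd` also `k + 1`
  obtain ⟨a, har, hle, hlt⟩ := exists_psum_le_lt d (r := r) (x := n - (k + 1)) (by omega)
  have hin : k + 1 < n - psum d a := by
    rcases Nat.eq_zero_or_pos a with rfl | ha
    · rw [psum_zero]; omega
    · have := hbd a ha har; omega
  have hend : psum d (a + 1) ≤ n := hsum ▸ psum_mono d har
  rw [psum_succ] at hlt hend
  obtain ⟨c, rfl⟩ : ∃ c, k = n - (psum d a + d a) + c := ⟨k - (n - (psum d a + d a)), by omega⟩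
  have hσc : (σ ⟨psum d a + c, by omega⟩ : ℕ) = n - (psum d a + d a) + c := by
    rw [hσ a c har (by omega), psum_succ]
  have hσc' : (σ ⟨psum d a + (c + 1), by omega⟩ : ℕ) = n - (psum d a + d a) + c + 1 := by
    rw [hσ a (c + 1) har (by omega), psum_succ, Nat.add_assoc]
  rw [σ.symm_apply_eq.mpr (Fin.ext hσc'.symm), σ.symm_apply_eq.mpr (Fin.ext hσc.symm)]
  simp only
  omega

/-- Let `w` be the permutation matrix of `σ` and `t = diag(t_1,…,t_n)` with all
`t_i ≠ 0`.  If `∑_k (t w ū w⁻¹ t⁻¹)_{k,k+1} = ∑_k ū_{k,k+1}` for every `ū ∈ Ū_σ(ℝ)` (upper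
triangular unipotent with `ū_{ij} = 0` whenever `i < j` and `σ(i) > σ(j)`), then `σ =
w_{d_1,…,d_r}` for some composition of `n`, and `t_k = t_{k+1}` whenever `k, k+1` lie in the
same interval of the partition of `{1,…,n}` into consecutive intervals of lengths
`d_r, d_{r-1}, …, d_1` (equivalently, whenever `k ∉ {n - D_a : 1 ≤ a ≤ r-1}`; in the 0-indexed
formalization below, `k` corresponds to `k₀ + 1`). -/
theorem stmt4 (n : ℕ) (hn : 2 ≤ n) (σ : Equiv.Perm (Fin n)) (t : Fin n → ℝ)
    (ht : ∀ i, t i ≠ 0)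
    (hψ : ∀ u : Matrix (Fin n) (Fin n) ℝ, IsUnipUpper u →
      (∀ i j : Fin n, i < j → σ j < σ i → u i j = 0) →
      superdiagSum
        (Matrix.diagonal t * permMat n σ * u * (permMat n σ)⁻¹ * (Matrix.diagonal t)⁻¹) =
        superdiagSum u) :
    ∃ (r : ℕ) (d : ℕ → ℕ), 0 < r ∧ (∀ a < r, 0 < d a) ∧ psum d r = n ∧
      IsBlockPerm n r d σ ∧
      ∀ (k : ℕ) (hk : k + 1 < n), (∀ a, 1 ≤ a → a < r → k + 1 ≠ n - psum d a) →
        t ⟨k, Nat.lt_of_succ_lt hk⟩ = t ⟨k + 1, hk⟩ := by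
  have hadj : σ.SuccAdjacent := fun i j hij hσ =>
    (PreservesSuperdiagSum.succ_apply hψ ht hij hσ).1
  obtain ⟨r, d, hd, hsum, hblock⟩ := hadj.exists_isBlockPerm
  refine ⟨r, d, Nat.pos_of_ne_zero ?_, hd, hsum, hblock, fun k hk hbd => ?_⟩
  · rintro rfl
    rw [psum_zero] at hsum
    omega
  · have hsucc := hblock.val_symm_succ hsum hk hbd
    have hσ : (σ (σ.symm ⟨k + 1, hk⟩) : ℕ) = σ (σ.symm ⟨k, by omega⟩) + 1 := by simp
    simpa using (PreservesSuperdiagSum.succ_apply hψ ht (Fin.lt_def.2 (by omega)) hσ).2
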